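/- arXiv:2303.16713 — 4 statements merged into one kernel-verified Lean document; each statement's English description precedes it below -/
import Mathlib

section
/- Let $(X,d,\mu)$ be a metric measure space in which every nonempty open set has positive measure and every bounded set has finite measure, satisfying the $\delta$-annular decay property for some $\delta\in(0,1]$ with constant $K\geq 1$, and let $\alpha\colon X\to[0,\delta]$. If $f\in C^{0,\alpha(\cdot)}(X)$ with $\|f\|_{C^{0,\alpha(\cdot)}(X)}\leq 1$, then for all distinct $x,y\in X$ with $d(x,y)\leq 1$, $Mf(y)\geq Mf(x)-\max\{7,\,1+12K\,2^{\delta}\}\min\{d(x,y)^{\alpha(x)},\,d(x,y)^{\alpha(y)}\}$. -/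
/-!
Fix `ρ > 0` and write `d = dist x y`, `m = min (d ^ α x) (d ^ α y)`; it suffices to bound the
average of `|f|` over `B(x, ρ)` by `Mf(y) + C m`. If `ρ ≤ d`, the Hölder bound at `x`, or at `y` on
`B(y, 2d)`, gives `|f| ≤ |f y| + 2m` on `B(x, ρ)`, and `|f y| ≤ Mf(y)` by continuity. If `ρ > d`,
then `B(y, ρ - d) ⊆ B(x, ρ) ⊆ B(y, ρ + d)`, so by annular decay the two balls differ by at most the
fraction `K (2d / (ρ + d)) ^ δ` of the larger one. As `|f|` deviates by at most `(2(ρ + d)) ^ α z`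
from `|f z|` on both balls (`z = x` or `y`), their averages differ by at most
`2K (2d / (ρ + d)) ^ δ (2(ρ + d)) ^ α z ≤ 8K d ^ α z`, using `α z ≤ δ ≤ 1`.
-/

open MeasureTheory Metric Set Filter
open scoped ENNReal

noncomputable def maxFun {X : Type*} [MetricSpace X] [MeasurableSpace X]
    (μ : Measure X) (f : X → ℝ) (x : X) : ℝ :=
  ⨆ r : {r : ℝ // 0 < r}, ⨍ t in ball x r.1, |f t| ∂μ

noncomputable def holderSemi {X : Type*} [MetricSpace X] (α : X → ℝ) (f : X → ℝ) : ℝ :=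
  ⨆ p : {p : X × X // p.1 ≠ p.2}, |f p.1.1 - f p.1.2| / dist p.1.1 p.1.2 ^ α p.1.1

noncomputable def holderNorm {X : Type*} [MetricSpace X] (α : X → ℝ) (f : X → ℝ) : ℝ :=
  (⨆ x, |f x|) + holderSemi α f

def MemVarHolder {X : Type*} [MetricSpace X] (α : X → ℝ) (f : X → ℝ) : Prop :=
  Continuous f ∧ BddAbove (Set.range fun x => |f x|) ∧
    BddAbove (Set.range fun p : {p : X × X // p.1 ≠ p.2} =>
      |f p.1.1 - f p.1.2| / dist p.1.1 p.1.2 ^ α p.1.1)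

namespace MeasureTheory

variable {Ω : Type*} [MeasurableSpace Ω] {μ : Measure Ω} {g : Ω → ℝ} {s : Set Ω} {c : ℝ}

theorem setAverage_le_of_forall_le (hμ : μ s ≠ 0) (hμ₁ : μ s ≠ ∞) (hg : IntegrableOn g s μ)
    (h : ∀ t ∈ s, g t ≤ c) : ⨍ t in s, g t ∂μ ≤ c := by
  obtain ⟨t, ht, hle⟩ := exists_setAverage_le hμ hμ₁ hg
  exact hle.trans (h t ht)

theorem le_setAverage_of_forall_le (hμ : μ s ≠ 0) (hμ₁ : μ s ≠ ∞) (hg : IntegrableOn g s μ)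
    (h : ∀ t ∈ s, c ≤ g t) : c ≤ ⨍ t in s, g t ∂μ := by
  obtain ⟨t, ht, hle⟩ := exists_le_setAverage hμ hμ₁ hg
  exact (h t ht).trans hle

theorem setAverage_le_setAverage_add_of_subset {A B : Set Ω} {m r η : ℝ} (hAB : A ⊆ B)
    (hA : MeasurableSet A) (hB : MeasurableSet B) (hA₀ : μ A ≠ 0) (hB₁ : μ B ≠ ∞)
    (hg : IntegrableOn g B μ) (hr : 0 ≤ r) (hup : ∀ t ∈ A, g t ≤ m + r)
    (hlow : ∀ t ∈ B \ A, m ≤ g t) (hη : μ.real (B \ A) ≤ η * μ.real B) :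
    ⨍ t in A, g t ∂μ ≤ ⨍ t in B, g t ∂μ + η * r := by
  have hA₁ : μ A ≠ ∞ := measure_ne_top_of_subset hAB hB₁
  have ha : 0 < μ.real A := ENNReal.toReal_pos hA₀ hA₁
  have hab : μ.real A ≤ μ.real B := measureReal_mono hAB hB₁
  have hdiff : μ.real (B \ A) = μ.real B - μ.real A := measureReal_sdiff hAB hA hB₁
  have hu : ⨍ t in A, g t ∂μ ≤ m + r := setAverage_le_of_forall_le hA₀ hA₁ (hg.mono_set hAB) hup
  have hsplit : ∫ t in B, g t ∂μ = ∫ t in A, g t ∂μ + ∫ t in B \ A, g t ∂μ := by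
    rw [← setIntegral_union disjoint_sdiff_right (hB.diff hA) (hg.mono_set hAB)
      (hg.mono_set sdiff_subset), union_sdiff_cancel hAB]
  have hlowint : m * μ.real (B \ A) ≤ ∫ t in B \ A, g t ∂μ :=
    setIntegral_ge_of_const_le_real (hB.diff hA) (measure_ne_top_of_subset sdiff_subset hB₁) hlow
      (hg.mono_set sdiff_subset)
  have hIA := measure_smul_setAverage g hA₁
  have hIB := measure_smul_setAverage g hB₁
  rw [smul_eq_mul] at hIA hIB
  rw [hdiff] at hη hlowint
  -- `μ(B) (⨍_A g - ⨍_B g) ≤ μ(B \ A) (⨍_A g - m) ≤ μ(B \ A) r ≤ η μ(B) r`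
  have key : μ.real B * ⨍ t in A, g t ∂μ ≤ μ.real B * (⨍ t in B, g t ∂μ + η * r) := by
    nlinarith [mul_nonneg (sub_nonneg.2 hab) (sub_nonneg.2 hu), mul_nonneg (sub_nonneg.2 hη) hr]
  exact le_of_mul_le_mul_left key (ha.trans_le hab)

end MeasureTheory

section MaximalFunction

variable {X : Type*} [MetricSpace X] [MeasurableSpace X] {μ : Measure X} {f : X → ℝ}

theorem maxFun_le {z : X} {c : ℝ} (h : ∀ r, 0 < r → ⨍ t in ball z r, |f t| ∂μ ≤ c) :
    maxFun μ f z ≤ c :=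
  have : Nonempty {r : ℝ // 0 < r} := ⟨⟨1, one_pos⟩⟩
  ciSup_le fun r => h r.1 r.2

variable [BorelSpace X] {M : ℝ}

theorem integrableOn_abs_of_bound (hc : Continuous f) (hM : ∀ t, |f t| ≤ M) {s : Set X}
    (hs : μ s ≠ ∞) : IntegrableOn (fun t => |f t|) s μ :=
  Measure.integrableOn_of_bounded hs hc.abs.aestronglyMeasurable
    (Eventually.of_forall fun t => by simpa only [Real.norm_eq_abs, abs_abs] using hM t)

variable [μ.IsOpenPosMeasure]

theorem setAverage_ball_le_maxFun (hfin : ∀ z r, μ (ball z r) ≠ ∞) (hc : Continuous f)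
    (hM : ∀ t, |f t| ≤ M) {z : X} {r : ℝ} (hr : 0 < r) :
    ⨍ t in ball z r, |f t| ∂μ ≤ maxFun μ f z := by
  refine le_ciSup (f := fun r : {r : ℝ // 0 < r} => ⨍ t in ball z r.1, |f t| ∂μ)
    ⟨M, ?_⟩ ⟨r, hr⟩
  rintro _ ⟨⟨ρ, hρ⟩, rfl⟩
  exact setAverage_le_of_forall_le (measure_ball_pos μ z hρ).ne' (hfin z ρ)
    (integrableOn_abs_of_bound hc hM (hfin z ρ)) fun t _ => hM t

theorem abs_le_maxFun (hfin : ∀ z r, μ (ball z r) ≠ ∞) (hc : Continuous f)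
    (hM : ∀ t, |f t| ≤ M) (y : X) : |f y| ≤ maxFun μ f y := by
  refine le_of_forall_pos_le_add fun η hη => ?_
  obtain ⟨ρ, hρ, hclose⟩ := Metric.continuous_iff.1 hc y η hη
  have hlow : |f y| - η ≤ ⨍ t in ball y ρ, |f t| ∂μ :=
    le_setAverage_of_forall_le (measure_ball_pos μ y hρ).ne' (hfin y ρ)
      (integrableOn_abs_of_bound hc hM (hfin y ρ)) fun t ht => by
        have := abs_sub_abs_le_abs_sub (f y) (f t)
        rw [abs_sub_comm, ← Real.dist_eq] at this
        linarith [hclose t ht]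
  linarith [setAverage_ball_le_maxFun hfin hc hM hρ (z := y)]

end MaximalFunction

namespace MemVarHolder

variable {X : Type*} [MetricSpace X] {α : X → ℝ} {f : X → ℝ}

theorem abs_le_one (hf : MemVarHolder α f) (h1 : holderNorm α f ≤ 1) (t : X) : |f t| ≤ 1 := by
  have hsemi : 0 ≤ holderSemi α f :=
    Real.iSup_nonneg fun p => div_nonneg (abs_nonneg _) (Real.rpow_nonneg dist_nonneg _)
  have := le_ciSup hf.2.1 t
  simp only [holderNorm] at h1
  linarith

theorem abs_sub_le_rpow (hf : MemVarHolder α f) (h1 : holderNorm α f ≤ 1) (u v : X) :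
    |f u - f v| ≤ dist u v ^ α u := by
  rcases eq_or_ne u v with rfl | huv
  · simpa using Real.rpow_nonneg (dist_nonneg (x := u) (y := u)) (α u)
  have hsup : 0 ≤ ⨆ t, |f t| := Real.iSup_nonneg fun t => abs_nonneg _
  have hq : |f u - f v| / dist u v ^ α u ≤ 1 := by
    have := le_ciSup hf.2.2 ⟨(u, v), huv⟩
    simp only [holderNorm, holderSemi] at h1 ⊢
    linarith
  rwa [div_le_one (Real.rpow_pos_of_pos (dist_pos.2 huv) _)] at hq

theorem abs_abs_sub_abs_le_rpow (hf : MemVarHolder α f) (h1 : holderNorm α f ≤ 1)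
    {z t : X} (hα : 0 ≤ α z) {R : ℝ} (ht : dist z t ≤ R) : |(|f t| - |f z|)| ≤ R ^ α z :=
  calc |(|f t| - |f z|)| ≤ |f z - f t| := by
        rw [abs_sub_comm (f z)]
        exact abs_abs_sub_abs_le_abs_sub _ _
    _ ≤ dist z t ^ α z := hf.abs_sub_le_rpow h1 z t
    _ ≤ R ^ α z := Real.rpow_le_rpow dist_nonneg ht hα

theorem abs_le_abs_add_two_mul_min (hf : MemVarHolder α f) (h1 : holderNorm α f ≤ 1) {x y t : X}
    (hαx : 0 ≤ α x) (hαy : α y ∈ Icc 0 1) (ht : dist t x ≤ dist x y) :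
    |f t| ≤ |f y| + 2 * min (dist x y ^ α x) (dist x y ^ α y) := by
  have hdyt : dist y t ≤ 2 * dist x y := by
    linarith [dist_triangle y x t, dist_comm x y, dist_comm x t]
  have hvia_y : |(|f t| - |f y|)| ≤ 2 * dist x y ^ α y :=
    calc |(|f t| - |f y|)| ≤ (2 * dist x y) ^ α y := hf.abs_abs_sub_abs_le_rpow h1 hαy.1 hdyt
      _ = 2 ^ α y * dist x y ^ α y := Real.mul_rpow zero_le_two dist_nonneg
      _ ≤ 2 * dist x y ^ α y := by
          gcongr
          simpa using Real.rpow_le_rpow_of_exponent_le one_le_two hαy.2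
  have htx := hf.abs_abs_sub_abs_le_rpow h1 hαx (t := t) (R := dist x y) (by rwa [dist_comm x t])
  have hyx := hf.abs_abs_sub_abs_le_rpow h1 hαx (t := y) le_rfl
  rcases min_choice (dist x y ^ α x) (dist x y ^ α y) with h | h <;> rw [h]
  · linarith [abs_le.1 htx, abs_le.1 hyx]
  · linarith [abs_le.1 hvia_y]

end MemVarHolder

def HasAnnularDecay {X : Type*} [MetricSpace X] [MeasurableSpace X] (μ : Measure X)
    (δ K : ℝ) : Prop :=
  ∀ (x : X) (r ε : ℝ), 0 < r → 0 < ε → ε < 1 →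
    μ (ball x r \ ball x (r * (1 - ε))) ≤ ENNReal.ofReal (K * ε ^ δ) * μ (ball x r)

section AnnularDecay

variable {X : Type*} [MetricSpace X] [MeasurableSpace X] {μ : Measure X} {δ K : ℝ}

theorem HasAnnularDecay.measureReal_ball_sdiff_ball_le (hann : HasAnnularDecay μ δ K)
    (hK : 0 ≤ K) {x y : X} {ρ : ℝ} (hfin : μ (ball y (ρ + dist x y)) ≠ ∞) (hxy : x ≠ y)
    (hρ : dist x y < ρ) :
    μ.real (ball y (ρ + dist x y) \ ball x ρ) ≤
      K * (2 * dist x y / (ρ + dist x y)) ^ δ * μ.real (ball y (ρ + dist x y)) := by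
  set d := dist x y
  set s := ρ + d
  set ε := 2 * d / s
  have hd : 0 < d := dist_pos.2 hxy
  have hs : 0 < s := add_pos (hd.trans hρ) hd
  have hε : 0 < ε := by positivity
  have hε₁ : ε < 1 := (div_lt_one hs).2 (by linarith)
  have hinner : ball y (s * (1 - ε)) ⊆ ball x ρ := by
    refine ball_subset_ball' ?_
    rw [dist_comm, mul_sub, mul_one, mul_div_cancel₀ _ hs.ne']
    linarith
  calc μ.real (ball y s \ ball x ρ) ≤ μ.real (ball y s \ ball y (s * (1 - ε))) :=
        measureReal_mono (sdiff_subset_sdiff_right hinner)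
          (measure_ne_top_of_subset sdiff_subset hfin)
    _ ≤ (ENNReal.ofReal (K * ε ^ δ) * μ (ball y s)).toReal :=
        ENNReal.toReal_mono (ENNReal.mul_ne_top ENNReal.ofReal_ne_top hfin) (hann y s ε hs hε hε₁)
    _ = K * ε ^ δ * μ.real (ball y s) := by
        rw [ENNReal.toReal_mul, ENNReal.toReal_ofReal (mul_nonneg hK (Real.rpow_nonneg hε.le δ)),
          measureReal_def]

end AnnularDecay

theorem div_rpow_mul_rpow_le_rpow {a s δ e : ℝ} (ha : 0 < a) (has : a ≤ s) (heδ : e ≤ δ) :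
    (a / s) ^ δ * s ^ e ≤ a ^ e := by
  have hs : 0 < s := ha.trans_le has
  calc (a / s) ^ δ * s ^ e ≤ (a / s) ^ e * s ^ e :=
        mul_le_mul_of_nonneg_right
          (Real.rpow_le_rpow_of_exponent_ge (div_pos ha hs) ((div_le_one hs).2 has) heδ)
          (Real.rpow_nonneg hs.le e)
    _ = a ^ e := by
        rw [Real.div_rpow ha.le hs.le, div_mul_cancel₀ _ (Real.rpow_pos_of_pos hs e).ne']

section MaximalFunctionComparison

variable {X : Type*} [MetricSpace X] [MeasurableSpace X] [BorelSpace X] {μ : Measure X}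
  [μ.IsOpenPosMeasure] {α : X → ℝ} {f : X → ℝ} {x y : X} {ρ : ℝ}

theorem setAverage_ball_le_maxFun_add_min_of_le (hfin : ∀ z r, μ (ball z r) ≠ ∞)
    (hf : MemVarHolder α f) (h1 : holderNorm α f ≤ 1) (hαx : 0 ≤ α x) (hαy : α y ∈ Icc 0 1)
    (hρ : 0 < ρ) (hρd : ρ ≤ dist x y) :
    ⨍ t in ball x ρ, |f t| ∂μ ≤ maxFun μ f y + 2 * min (dist x y ^ α x) (dist x y ^ α y) := by
  have hM := hf.abs_le_one h1
  have hpt : ∀ t ∈ ball x ρ, |f t| ≤ |f y| + 2 * min (dist x y ^ α x) (dist x y ^ α y) :=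
    fun t ht => hf.abs_le_abs_add_two_mul_min h1 hαx hαy ((mem_ball.1 ht).le.trans hρd)
  linarith [setAverage_le_of_forall_le (measure_ball_pos μ x hρ).ne' (hfin x ρ)
    (integrableOn_abs_of_bound hf.1 hM (hfin x ρ)) hpt, abs_le_maxFun hfin hf.1 hM y]

theorem setAverage_ball_le_maxFun_add_rpow_of_lt {δ K : ℝ} (hann : HasAnnularDecay μ δ K)
    (hK : 0 ≤ K) (hfin : ∀ z r, μ (ball z r) ≠ ∞) (hf : MemVarHolder α f)
    (h1 : holderNorm α f ≤ 1) {z : X} (hαz : α z ∈ Icc 0 δ) (hαz₁ : α z ≤ 1) (hxy : x ≠ y)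
    (hρ : dist x y < ρ) (hz : ball y (ρ + dist x y) ⊆ ball z (2 * (ρ + dist x y))) :
    ⨍ t in ball x ρ, |f t| ∂μ ≤ maxFun μ f y + 8 * K * dist x y ^ α z := by
  set d := dist x y
  set s := ρ + d
  set R := (2 * s) ^ α z
  have hd : 0 < d := dist_pos.2 hxy
  have hs : 0 < s := add_pos (hd.trans hρ) hd
  have hM := hf.abs_le_one h1
  have hAB : ball x ρ ⊆ ball y s := ball_subset_ball' le_rfl
  have hclose : ∀ t ∈ ball y s, |(|f t| - |f z|)| ≤ R := fun t ht =>
    hf.abs_abs_sub_abs_le_rpow h1 hαz.1 (by rw [dist_comm]; exact (mem_ball.1 (hz ht)).le)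
  have hcmp := setAverage_le_setAverage_add_of_subset (m := |f z| - R) (r := 2 * R) hAB
    measurableSet_ball measurableSet_ball (measure_ball_pos μ x (hd.trans hρ)).ne' (hfin y s)
    (integrableOn_abs_of_bound hf.1 hM (hfin y s)) (by positivity)
    (fun t ht => by linarith [(abs_le.1 (hclose t (hAB ht))).2])
    (fun t ht => by linarith [(abs_le.1 (hclose t ht.1)).1])
    (hann.measureReal_ball_sdiff_ball_le hK (hfin y s) hxy hρ)
  have hexcess : (2 * d / s) ^ δ * R ≤ 4 * d ^ α z :=
    calc (2 * d / s) ^ δ * R = (4 * d / (2 * s)) ^ δ * (2 * s) ^ α z := by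
          congr 2
          field_simp
          ring
      _ ≤ (4 * d) ^ α z := div_rpow_mul_rpow_le_rpow (by positivity) (by linarith) hαz.2
      _ = 4 ^ α z * d ^ α z := Real.mul_rpow (by norm_num) hd.le
      _ ≤ 4 * d ^ α z := by
          gcongr
          simpa using Real.rpow_le_rpow_of_exponent_le (by norm_num : (1 : ℝ) ≤ 4) hαz₁
  have := setAverage_ball_le_maxFun hfin hf.1 hM hs (z := y)
  nlinarith [mul_le_mul_of_nonneg_left hexcess hK]

theorem setAverage_ball_le_maxFun_add_min_of_lt {δ K : ℝ} (hann : HasAnnularDecay μ δ K)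
    (hK : 0 ≤ K) (hfin : ∀ z r, μ (ball z r) ≠ ∞) (hf : MemVarHolder α f)
    (h1 : holderNorm α f ≤ 1) (hαx : α x ∈ Icc 0 δ) (hαy : α y ∈ Icc 0 δ) (hδ : δ ≤ 1)
    (hxy : x ≠ y) (hρ : dist x y < ρ) :
    ⨍ t in ball x ρ, |f t| ∂μ ≤ maxFun μ f y + 8 * K * min (dist x y ^ α x) (dist x y ^ α y) := by
  have hd := dist_nonneg (x := x) (y := y)
  have hx := setAverage_ball_le_maxFun_add_rpow_of_lt hann hK hfin hf h1 hαx
    (hαx.2.trans hδ) hxy hρ (ball_subset_ball' (by rw [dist_comm y x]; linarith))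
  have hy := setAverage_ball_le_maxFun_add_rpow_of_lt hann hK hfin hf h1 hαy
    (hαy.2.trans hδ) hxy hρ (ball_subset_ball (by linarith))
  rcases min_choice (dist x y ^ α x) (dist x y ^ α y) with h | h <;> rw [h] <;> assumption

end MaximalFunctionComparison

theorem maximal_pointwise_lower_bound_general
    {X : Type*} [MetricSpace X] [MeasurableSpace X] [BorelSpace X] (μ : Measure X)
    (hopen : ∀ U : Set X, IsOpen U → U.Nonempty → 0 < μ U)
    (hbdd : ∀ s : Set X, Bornology.IsBounded s → μ s < ⊤)
    (δ K : ℝ) (hδ : δ ∈ Set.Ioc (0 : ℝ) 1) (hK : 1 ≤ K)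
    (hann : ∀ (x : X) (r ε : ℝ), 0 < r → 0 < ε → ε < 1 →
      μ (ball x r \ ball x (r * (1 - ε))) ≤ ENNReal.ofReal (K * ε ^ δ) * μ (ball x r))
    (α : X → ℝ) (hα : ∀ x, α x ∈ Set.Icc (0 : ℝ) δ)
    (f : X → ℝ) (hf : MemVarHolder α f) (hfnorm : holderNorm α f ≤ 1)
    (x y : X) (hxy : x ≠ y) :
    maxFun μ f x - max 7 (1 + 12 * K * 2 ^ δ) *
        min (dist x y ^ α x) (dist x y ^ α y) ≤ maxFun μ f y := by
  have hK₀ : 0 ≤ K := zero_le_one.trans hK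
  have : μ.IsOpenPosMeasure := ⟨fun U hU hne => (hopen U hU hne).ne'⟩
  have hfin : ∀ z r, μ (ball z r) ≠ ∞ := fun z r => (hbdd _ isBounded_ball).ne
  set m := min (dist x y ^ α x) (dist x y ^ α y)
  have hm : 0 ≤ m := le_min (Real.rpow_nonneg dist_nonneg _) (Real.rpow_nonneg dist_nonneg _)
  have h2C : 2 ≤ max 7 (1 + 12 * K * 2 ^ δ) := le_max_of_le_left (by norm_num)
  have h8KC : 8 * K ≤ max 7 (1 + 12 * K * 2 ^ δ) := by
    have := Real.one_le_rpow one_le_two hδ.1.le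
    exact le_max_of_le_right (by nlinarith)
  have hαy : α y ∈ Icc 0 1 := ⟨(hα y).1, (hα y).2.trans hδ.2⟩
  suffices maxFun μ f x ≤ maxFun μ f y + max 7 (1 + 12 * K * 2 ^ δ) * m by linarith
  refine maxFun_le fun ρ hρ => ?_
  rcases le_or_gt ρ (dist x y) with hρd | hρd
  · have := setAverage_ball_le_maxFun_add_min_of_le hfin hf hfnorm (hα x).1 hαy hρ hρd
    nlinarith
  · have := setAverage_ball_le_maxFun_add_min_of_lt hann hK₀ hfin hf hfnorm (hα x) (hα y) hδ.2
      hxy hρd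
    nlinarith

/-- The key pointwise inequality for the maximal function of a function
with variable exponent Hölder norm at most 1. -/
theorem maximal_pointwise_lower_bound
    {X : Type*} [MetricSpace X] [MeasurableSpace X] [BorelSpace X] (μ : Measure X)
    (hopen : ∀ U : Set X, IsOpen U → U.Nonempty → 0 < μ U)
    (hbdd : ∀ s : Set X, Bornology.IsBounded s → μ s < ⊤)
    (δ K : ℝ) (hδ : δ ∈ Set.Ioc (0 : ℝ) 1) (hK : 1 ≤ K)
    (hann : ∀ (x : X) (r ε : ℝ), 0 < r → 0 < ε → ε < 1 →
      μ (ball x r \ ball x (r * (1 - ε))) ≤ ENNReal.ofReal (K * ε ^ δ) * μ (ball x r))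
    (α : X → ℝ) (hα : ∀ x, α x ∈ Set.Icc (0 : ℝ) δ)
    (f : X → ℝ) (hf : MemVarHolder α f) (hfnorm : holderNorm α f ≤ 1)
    (x y : X) (hxy : x ≠ y) (hd : dist x y ≤ 1) :
    maxFun μ f x - max 7 (1 + 12 * K * 2 ^ δ) *
        min (dist x y ^ α x) (dist x y ^ α y) ≤ maxFun μ f y :=
  maximal_pointwise_lower_bound_general μ hopen hbdd δ K hδ hK hann α hα f hf hfnorm x y hxy
end

section
/- Let $(X,d,\mu)$ be a metric measure space in which every nonempty open set has positive measure and every bounded set has finite measure, satisfying the $\delta$-annular decay property for some $\delta\in(0,1]$. Let $\alpha\colon X\to(0,1]$ and $\beta\colon X\to[0,1]$ satisfy $\beta(x)\leq\alpha(x)\leq\delta$ for all $x$ and $\sup_{x\in X}\beta(x)/\alpha(x)<1$. Then the Hardy–Littlewood maximal operator $M\colon C^{0,\alpha(\cdot)}(X)\to C^{0,\beta(\cdot)}(X)$ is continuous: if $f_n\to f$ in $C^{0,\alpha(\cdot)}(X)$ then $Mf_n\to Mf$ in $C^{0,\beta(\cdot)}(X)$. -/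
/-!
Write `H` for the Hölder seminorm of `g`. For `d(p, q) ≤ r`, the averages of `|g|` over balls
`B(p, s)` are compared with `Mg(q)`. If `s ≤ r`, the Hölder bound alone gives
`⨍_{B(p,s)} |g| ≤ |g q| + 4 H r ^ α ≤ Mg(q) + 4 H r ^ α`. If `s > r`, then
`B(q, s - r) ⊆ B(p, s) ⊆ B(q, s + r)`: annular decay bounds the relative measure of the gap by
`K (2r / (s + r)) ^ δ`, `|g|` oscillates by at most `4 H (s + r) ^ α` on `B(q, s + r)`, and
`α ≤ δ` turns the product into `8 K H r ^ α`. So `Mg` is `α(·)`-Hölder with constant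
`(4 + 8K) H`, uniformly in `s`.

Since `M` is also `1`-Lipschitz for the sup norm, `u_n = M f_n - M f` satisfies
`|u_n x - u_n y| ≤ min (C d(x,y) ^ α(x), 2 ε_n)` with `ε_n = ‖f_n - f‖_α → 0` and `C` bounded;
interpolating between the two bounds gives `‖u_n‖_β ≤ ε_n + C (2 ε_n) ^ (1 - θ)` with
`θ = sup β / α < 1`.
-/

open MeasureTheory Metric Set Filter

open scoped ENNReal

section Holder

variable {X : Type*} [MetricSpace X] {α : X → ℝ} {f g : X → ℝ}

lemma holderSemi_nonneg (α g : X → ℝ) : 0 ≤ holderSemi α g :=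
  Real.iSup_nonneg fun _ => div_nonneg (abs_nonneg _) (Real.rpow_nonneg dist_nonneg _)

lemma holderNorm_nonneg (α g : X → ℝ) : 0 ≤ holderNorm α g :=
  add_nonneg (Real.iSup_nonneg fun _ => abs_nonneg _) (holderSemi_nonneg α g)

lemma holderSemi_le_holderNorm (α g : X → ℝ) : holderSemi α g ≤ holderNorm α g :=
  le_add_of_nonneg_left (Real.iSup_nonneg fun _ => abs_nonneg _)

lemma holderQuotient_le {C : ℝ} (hC : 0 ≤ C)
    (h : ∀ x y, x ≠ y → |g x - g y| ≤ C * dist x y ^ α x) (p : {p : X × X // p.1 ≠ p.2}) :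
    |g p.1.1 - g p.1.2| / dist p.1.1 p.1.2 ^ α p.1.1 ≤ C :=
  div_le_of_le_mul₀ (Real.rpow_nonneg dist_nonneg _) hC (h _ _ p.2)

lemma holderSemi_le {C : ℝ} (hC : 0 ≤ C)
    (h : ∀ x y, x ≠ y → |g x - g y| ≤ C * dist x y ^ α x) : holderSemi α g ≤ C :=
  Real.iSup_le (holderQuotient_le hC h) hC

lemma holderNorm_le {A B : ℝ} (hA : 0 ≤ A) (hB : 0 ≤ B) (hsup : ∀ x, |g x| ≤ A)
    (hhol : ∀ x y, x ≠ y → |g x - g y| ≤ B * dist x y ^ α x) : holderNorm α g ≤ A + B :=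
  add_le_add (Real.iSup_le hsup hA) (holderSemi_le hB hhol)

namespace MemVarHolder

lemma abs_le_iSup (hg : MemVarHolder α g) (x : X) : |g x| ≤ ⨆ t, |g t| :=
  le_ciSup hg.2.1 x

lemma abs_le_holderNorm (hg : MemVarHolder α g) (x : X) : |g x| ≤ holderNorm α g :=
  (hg.abs_le_iSup x).trans (le_add_of_nonneg_right (holderSemi_nonneg α g))

lemma abs_sub_le (hg : MemVarHolder α g) (x y : X) :
    |g x - g y| ≤ holderSemi α g * dist x y ^ α x := by
  rcases eq_or_ne x y with rfl | hxy
  · simpa using mul_nonneg (holderSemi_nonneg α g) (Real.rpow_nonneg le_rfl (α x))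
  · exact (div_le_iff₀ (Real.rpow_pos_of_pos (dist_pos.2 hxy) _)).1
      (le_ciSup hg.2.2 ⟨(x, y), hxy⟩)

lemma abs_sub_le_mul_rpow (hg : MemVarHolder α g) {x y : X} {c r : ℝ} (hc : 1 ≤ c)
    (hr : 0 ≤ r) (hα0 : 0 ≤ α x) (hα1 : α x ≤ 1) (hxy : dist x y ≤ c * r) :
    |g x - g y| ≤ c * holderSemi α g * r ^ α x := by
  have hcr : dist x y ^ α x ≤ c * r ^ α x :=
    calc dist x y ^ α x ≤ (c * r) ^ α x := Real.rpow_le_rpow dist_nonneg hxy hα0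
      _ = c ^ α x * r ^ α x := Real.mul_rpow (by linarith) hr
      _ ≤ c * r ^ α x := by
        gcongr
        simpa using Real.rpow_le_rpow_of_exponent_le hc hα1
  calc |g x - g y| ≤ holderSemi α g * dist x y ^ α x := hg.abs_sub_le x y
    _ ≤ holderSemi α g * (c * r ^ α x) := by gcongr; exact holderSemi_nonneg α g
    _ = c * holderSemi α g * r ^ α x := by ring

lemma sub (hg : MemVarHolder α g) (hf : MemVarHolder α f) :
    MemVarHolder α (fun x => g x - f x) := by
  refine ⟨hg.1.sub hf.1, ⟨(⨆ t, |g t|) + ⨆ t, |f t|, forall_mem_range.2 fun x => ?_⟩,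
    ⟨holderSemi α g + holderSemi α f, forall_mem_range.2 <|
      holderQuotient_le (g := fun x => g x - f x)
        (add_nonneg (holderSemi_nonneg α g) (holderSemi_nonneg α f)) fun x y _ => ?_⟩⟩
  · exact (abs_sub _ _).trans (add_le_add (hg.abs_le_iSup x) (hf.abs_le_iSup x))
  · calc |g x - f x - (g y - f y)| ≤ |g x - g y| + |f x - f y| := by
          rw [sub_sub_sub_comm]; exact abs_sub _ _
      _ ≤ _ := by rw [add_mul]; exact add_le_add (hg.abs_sub_le x y) (hf.abs_sub_le x y)

lemma holderSemi_le_add_holderSemi_sub (hg : MemVarHolder α g) (hf : MemVarHolder α f) :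
    holderSemi α g ≤ holderSemi α f + holderSemi α (fun x => g x - f x) := by
  refine holderSemi_le (add_nonneg (holderSemi_nonneg α f) (holderSemi_nonneg _ _))
    fun x y _ => ?_
  calc |g x - g y| = |(f x - f y) + ((g x - f x) - (g y - f y))| := by ring_nf
      _ ≤ |f x - f y| + |(g x - f x) - (g y - f y)| := abs_add_le _ _
      _ ≤ _ := by rw [add_mul]; exact add_le_add (hf.abs_sub_le x y) ((hg.sub hf).abs_sub_le x y)

end MemVarHolder

end Holder

-- Split `Δ = Δ ^ (b / a) * Δ ^ (1 - b / a)` and use `Δ ≤ C * d ^ a` on the first factor,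
-- `Δ ≤ t` on the second.
lemma le_mul_rpow_mul_rpow_of_le_of_le {Δ t d C a b θ : ℝ} (hΔ : 0 ≤ Δ) (hd : 0 ≤ d)
    (hC : 1 ≤ C) (ha : 0 < a) (hb : 0 ≤ b) (hba : b ≤ a) (hθ : b / a ≤ θ) (hθ1 : θ ≤ 1)
    (ht1 : t ≤ 1) (hΔd : Δ ≤ C * d ^ a) (hΔt : Δ ≤ t) :
    Δ ≤ C * t ^ (1 - θ) * d ^ b := by
  set θ' := b / a
  have hθ'0 : 0 ≤ θ' := div_nonneg hb ha.le
  have hθ'1 : θ' ≤ 1 := div_le_one_of_le₀ hba ha.le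
  have hfirst : Δ ^ θ' ≤ C * d ^ b :=
    calc Δ ^ θ' ≤ (C * d ^ a) ^ θ' := Real.rpow_le_rpow hΔ hΔd hθ'0
      _ = C ^ θ' * d ^ b := by
        rw [Real.mul_rpow (by linarith) (Real.rpow_nonneg hd a), ← Real.rpow_mul hd,
          mul_div_cancel₀ b ha.ne']
      _ ≤ C * d ^ b := by
        gcongr
        simpa using Real.rpow_le_rpow_of_exponent_le hC hθ'1
  have hsecond : Δ ^ (1 - θ') ≤ t ^ (1 - θ) :=
    calc Δ ^ (1 - θ') ≤ t ^ (1 - θ') := Real.rpow_le_rpow hΔ hΔt (by linarith)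
      _ ≤ t ^ (1 - θ) :=
        Real.rpow_le_rpow_of_exponent_ge' (hΔ.trans hΔt) ht1 (by linarith) (by linarith)
  calc Δ = Δ ^ θ' * Δ ^ (1 - θ') := by
        rw [← Real.rpow_add' hΔ (by norm_num), add_sub_cancel, Real.rpow_one]
    _ ≤ C * d ^ b * t ^ (1 - θ) :=
        mul_le_mul hfirst hsecond (Real.rpow_nonneg hΔ _) (by positivity)
    _ = C * t ^ (1 - θ) * d ^ b := by ring

lemma two_mul_div_rpow_mul_rpow_le {r R a δ : ℝ} (hr : 0 ≤ r) (hR : 0 < R) (hrR : r ≤ R)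
    (ha : 0 ≤ a) (haδ : a ≤ δ) (hδ : δ ≤ 1) : (2 * r / R) ^ δ * R ^ a ≤ 2 * r ^ a := by
  have hrR' : 0 ≤ r / R := div_nonneg hr hR.le
  calc (2 * r / R) ^ δ * R ^ a = 2 ^ δ * (r / R) ^ δ * R ^ a := by
        rw [mul_div_assoc, Real.mul_rpow zero_le_two hrR']
    _ ≤ 2 * (r / R) ^ a * R ^ a := by
        refine mul_le_mul_of_nonneg_right (mul_le_mul ?_ ?_ (by positivity) zero_le_two)
          (by positivity)
        · simpa using Real.rpow_le_rpow_of_exponent_le one_le_two hδ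
        · exact Real.rpow_le_rpow_of_exponent_ge' hrR' (div_le_one_of_le₀ hrR hR.le) ha haδ
    _ = 2 * r ^ a := by
        rw [Real.div_rpow hr hR.le, mul_assoc, div_mul_cancel₀ _ (Real.rpow_pos_of_pos hR a).ne']

lemma holderNorm_le_of_interpolation {X : Type*} [MetricSpace X] {α β u : X → ℝ} {ε C θ : ℝ}
    (hε : 0 ≤ ε) (hε1 : 2 * ε ≤ 1) (hC : 1 ≤ C) (hα : ∀ x, 0 < α x) (hβ : ∀ x, 0 ≤ β x)
    (hβα : ∀ x, β x ≤ α x) (hθ : ∀ x, β x / α x ≤ θ) (hθ1 : θ ≤ 1) (hsup : ∀ x, |u x| ≤ ε)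
    (hhol : ∀ x y, x ≠ y → |u x - u y| ≤ C * dist x y ^ α x) :
    holderNorm β u ≤ ε + C * (2 * ε) ^ (1 - θ) :=
  holderNorm_le hε (by positivity) hsup fun x y hxy =>
    le_mul_rpow_mul_rpow_of_le_of_le (abs_nonneg _) dist_nonneg hC (hα x) (hβ x) (hβα x) (hθ x)
      hθ1 hε1 (hhol x y hxy) ((abs_sub _ _).trans (by linarith [hsup x, hsup y]))

section Average

variable {Ω : Type*} [MeasurableSpace Ω] {μ : Measure Ω} {f g : Ω → ℝ} {s t : Set Ω}

lemma setAverage_mono_on (hs : MeasurableSet s) (hf : IntegrableOn f s μ)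
    (hg : IntegrableOn g s μ) (h : ∀ x ∈ s, f x ≤ g x) :
    ⨍ x in s, f x ∂μ ≤ ⨍ x in s, g x ∂μ := by
  rw [setAverage_eq, setAverage_eq]
  exact smul_le_smul_of_nonneg_left (setIntegral_mono_on hf hg hs h) (by positivity)

lemma setAverage_le_of_forall_le (hs : MeasurableSet s) (hμ₀ : μ s ≠ 0) (hμ : μ s ≠ ∞)
    (hf : IntegrableOn f s μ) {c : ℝ} (h : ∀ x ∈ s, f x ≤ c) : ⨍ x in s, f x ∂μ ≤ c :=
  (setAverage_mono_on hs hf (integrableOn_const hμ) h).trans_eq (setAverage_const hμ₀ hμ c)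

lemma le_setAverage_of_forall_le (hs : MeasurableSet s) (hμ₀ : μ s ≠ 0) (hμ : μ s ≠ ∞)
    (hf : IntegrableOn f s μ) {c : ℝ} (h : ∀ x ∈ s, c ≤ f x) : c ≤ ⨍ x in s, f x ∂μ :=
  (setAverage_const hμ₀ hμ c).symm.trans_le (setAverage_mono_on hs (integrableOn_const hμ) hf h)

lemma setAverage_add_const (hμ₀ : μ s ≠ 0) (hμ : μ s ≠ ∞) (hf : IntegrableOn f s μ) (c : ℝ) :
    ⨍ x in s, (f x + c) ∂μ = ⨍ x in s, f x ∂μ + c := by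
  rw [setAverage_eq, integral_add hf (integrableOn_const hμ), smul_add, ← setAverage_eq,
    ← setAverage_eq, setAverage_const hμ₀ hμ]

lemma setAverage_le_setAverage_add_of_subset (hst : s ⊆ t) (hs : MeasurableSet s)
    (ht : MeasurableSet t) (hμs : μ s ≠ 0) (hμt : μ t ≠ ∞) (hf : IntegrableOn f t μ) {S I : ℝ}
    (hS : ∀ x ∈ s, f x ≤ S) (hI : ∀ x ∈ t \ s, I ≤ f x) :
    ⨍ x in s, f x ∂μ ≤ ⨍ x in t, f x ∂μ + μ.real (t \ s) / μ.real t * (S - I) := by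
  have hb : 0 < μ.real s := ENNReal.toReal_pos hμs (measure_ne_top_of_subset hst hμt)
  have ha : 0 < μ.real t := hb.trans_le (measureReal_mono hst hμt)
  have hdiff : μ.real (t \ s) = μ.real t - μ.real s := measureReal_sdiff hst hs hμt
  have hsplit : ∫ x in t, f x ∂μ = ∫ x in s, f x ∂μ + ∫ x in t \ s, f x ∂μ := by
    rw [setIntegral_sdiff hs hf hst]; ring
  have hupper : ∫ x in s, f x ∂μ ≤ S * μ.real s := by
    simpa [mul_comm] using setIntegral_mono_on (hf.mono_set hst) (integrableOn_const
      (measure_ne_top_of_subset hst hμt)) hs hS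
  have hlower : I * μ.real (t \ s) ≤ ∫ x in t \ s, f x ∂μ := by
    simpa [mul_comm] using setIntegral_mono_on (integrableOn_const
      (measure_ne_top_of_subset sdiff_subset hμt)) (hf.mono_set sdiff_subset) (ht.diff hs) hI
  rw [setAverage_eq, setAverage_eq, smul_eq_mul, smul_eq_mul, hsplit, hdiff,
    inv_mul_le_iff₀ hb]
  rw [hdiff] at hlower
  field_simp
  nlinarith [mul_le_mul_of_nonneg_left hupper (sub_nonneg.2 (measureReal_mono hst hμt)),
    mul_le_mul_of_nonneg_left hlower hb.le]

end Average

section MaximalFunction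

variable {X : Type*} [MetricSpace X] [MeasurableSpace X] {μ : Measure X} {f g : X → ℝ}
  {Mf Mg : ℝ}

lemma maxFun_le_of_forall {x : X} {c : ℝ} (h : ∀ r, 0 < r → ⨍ t in ball x r, |g t| ∂μ ≤ c) :
    maxFun μ g x ≤ c :=
  haveI : Nonempty {r : ℝ // 0 < r} := ⟨⟨1, one_pos⟩⟩
  ciSup_le fun r => h r.1 r.2

variable [OpensMeasurableSpace X]

lemma integrableOn_abs_of_bounded (hg : Continuous g) (hgM : ∀ t, |g t| ≤ Mg) {s : Set X}
    (hs : μ s ≠ ∞) : IntegrableOn (fun t => |g t|) s μ :=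
  Measure.integrableOn_of_bounded hs hg.abs.aestronglyMeasurable
    (ae_of_all _ fun t => by simpa using hgM t)

variable [μ.IsOpenPosMeasure]

lemma setAverage_ball_le_maxFun_s2 (hball : ∀ x r, μ (ball x r) ≠ ∞) (hg : Continuous g)
    (hgM : ∀ t, |g t| ≤ Mg) (x : X) {r : ℝ} (hr : 0 < r) :
    ⨍ t in ball x r, |g t| ∂μ ≤ maxFun μ g x := by
  refine le_ciSup (f := fun r : {r : ℝ // 0 < r} => ⨍ t in ball x r.1, |g t| ∂μ)
    ⟨Mg, forall_mem_range.2 fun r => ?_⟩ ⟨r, hr⟩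
  exact setAverage_le_of_forall_le measurableSet_ball (measure_ball_pos μ x r.2).ne'
    (hball x r) (integrableOn_abs_of_bounded hg hgM (hball x r)) fun t _ => hgM t

lemma abs_le_maxFun_s2 (hball : ∀ x r, μ (ball x r) ≠ ∞) (hg : Continuous g)
    (hgM : ∀ t, |g t| ≤ Mg) (x : X) : |g x| ≤ maxFun μ g x := by
  refine le_of_forall_pos_le_add fun ε hε => ?_
  obtain ⟨r, hr, hclose⟩ := Metric.continuousAt_iff.1 hg.continuousAt ε hε
  have havg : |g x| - ε ≤ ⨍ t in ball x r, |g t| ∂μ :=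
    le_setAverage_of_forall_le measurableSet_ball (measure_ball_pos μ x hr).ne' (hball x r)
      (integrableOn_abs_of_bounded hg hgM (hball x r)) fun t ht => by
        have := hclose ht
        rw [Real.dist_eq] at this
        linarith [abs_sub_abs_le_abs_sub (g x) (g t), abs_sub_comm (g t) (g x)]
  linarith [setAverage_ball_le_maxFun_s2 hball hg hgM x hr]

lemma maxFun_le_maxFun_add (hball : ∀ x r, μ (ball x r) ≠ ∞) (hg : Continuous g)
    (hgM : ∀ t, |g t| ≤ Mg) (hf : Continuous f) (hfM : ∀ t, |f t| ≤ Mf) {D : ℝ}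
    (hD : ∀ t, |g t - f t| ≤ D) (x : X) : maxFun μ g x ≤ maxFun μ f x + D :=
  maxFun_le_of_forall fun r hr => by
    have hμ₀ := (measure_ball_pos μ x hr).ne'
    have hint := integrableOn_abs_of_bounded hf hfM (hball x r)
    calc ⨍ t in ball x r, |g t| ∂μ ≤ ⨍ t in ball x r, (|f t| + D) ∂μ :=
          setAverage_mono_on measurableSet_ball
            (integrableOn_abs_of_bounded hg hgM (hball x r))
            (hint.add (integrableOn_const (hball x r))) fun t _ => by
              linarith [abs_sub_abs_le_abs_sub (g t) (f t), hD t]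
      _ = ⨍ t in ball x r, |f t| ∂μ + D := setAverage_add_const hμ₀ (hball x r) hint D
      _ ≤ maxFun μ f x + D := by
          gcongr; exact setAverage_ball_le_maxFun_s2 hball hf hfM x hr

lemma abs_maxFun_sub_maxFun_le (hball : ∀ x r, μ (ball x r) ≠ ∞) (hg : Continuous g)
    (hgM : ∀ t, |g t| ≤ Mg) (hf : Continuous f) (hfM : ∀ t, |f t| ≤ Mf) {D : ℝ}
    (hD : ∀ t, |g t - f t| ≤ D) (x : X) : |maxFun μ g x - maxFun μ f x| ≤ D := by
  have hgf := maxFun_le_maxFun_add hball hg hgM hf hfM hD x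
  have hfg := maxFun_le_maxFun_add hball hf hfM hg hgM
    (fun t => abs_sub_comm (f t) (g t) ▸ hD t) x
  rw [abs_sub_le_iff]
  constructor <;> linarith

end MaximalFunction

-- `B(q, s - r) ⊆ B(p, s)`, and `s - r = (s + r) * (1 - 2 * r / (s + r))`.
lemma HasAnnularDecay.measureReal_ball_sdiff_ball_le_s2 {X : Type*} [MetricSpace X]
    [MeasurableSpace X] {μ : Measure X} {δ K : ℝ} (hann : HasAnnularDecay μ δ K) (hK : 0 ≤ K)
    (hball : ∀ x r, μ (ball x r) ≠ ∞) {p q : X} {r s : ℝ} (hpq : dist p q ≤ r) (hr : 0 < r)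
    (hrs : r < s) :
    μ.real (ball q (s + r) \ ball p s) ≤ K * (2 * r / (s + r)) ^ δ * μ.real (ball q (s + r)) := by
  have hR : 0 < s + r := by linarith
  have hinner : ball q ((s + r) * (1 - 2 * r / (s + r))) ⊆ ball p s := by
    rw [show (s + r) * (1 - 2 * r / (s + r)) = s - r by field_simp; ring]
    exact ball_subset_ball' (by linarith [dist_comm p q])
  have hdecay := ENNReal.toReal_mono (ENNReal.mul_ne_top ENNReal.ofReal_ne_top (hball q _))
    (hann q (s + r) (2 * r / (s + r)) hR (div_pos (by linarith) hR)
      ((div_lt_one hR).2 (by linarith)))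
  rw [ENNReal.toReal_mul, ENNReal.toReal_ofReal (by positivity)] at hdecay
  exact (measureReal_mono (sdiff_subset_sdiff_right hinner)
    (measure_ne_top_of_subset sdiff_subset (hball q _))).trans hdecay

section HolderMaximal

variable {X : Type*} [MetricSpace X] [MeasurableSpace X] [OpensMeasurableSpace X]
  {μ : Measure X} [μ.IsOpenPosMeasure] {α : X → ℝ} {f g : X → ℝ} {δ K : ℝ} {p q z : X}
  {r s : ℝ}

lemma setAverage_ball_le_maxFun_add_of_le (hball : ∀ x r, μ (ball x r) ≠ ∞)
    (hg : MemVarHolder α g) (hα0 : 0 ≤ α z) (hα1 : α z ≤ 1) (hpq : dist p q ≤ r)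
    (hqz : dist q z ≤ r) (hs : 0 < s) (hsr : s ≤ r) :
    ⨍ t in ball p s, |g t| ∂μ ≤ maxFun μ g q + 4 * holderSemi α g * r ^ α z := by
  have hr : 0 ≤ r := hs.le.trans hsr
  have hzq : |g z - g q| ≤ 1 * holderSemi α g * r ^ α z :=
    hg.abs_sub_le_mul_rpow le_rfl hr hα0 hα1 (by rw [dist_comm, one_mul]; exact hqz)
  have hq : |g q| ≤ maxFun μ g q := abs_le_maxFun_s2 hball hg.1 hg.abs_le_iSup q
  refine setAverage_le_of_forall_le measurableSet_ball (measure_ball_pos μ p hs).ne'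
    (hball p s) (integrableOn_abs_of_bounded hg.1 hg.abs_le_iSup (hball p s)) fun t ht => ?_
  have hzt : |g z - g t| ≤ 3 * holderSemi α g * r ^ α z := by
    refine hg.abs_sub_le_mul_rpow (by norm_num) hr hα0 hα1 ?_
    linarith [dist_triangle4 z q p t, mem_ball'.1 ht, dist_comm z q, dist_comm q p]
  linarith [abs_sub_abs_le_abs_sub (g z) (g q), abs_sub_abs_le_abs_sub (g t) (g z),
    abs_sub_comm (g t) (g z)]

lemma setAverage_ball_le_maxFun_add_of_lt (hball : ∀ x r, μ (ball x r) ≠ ∞)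
    (hann : HasAnnularDecay μ δ K) (hK : 0 ≤ K) (hδ : δ ≤ 1) (hg : MemVarHolder α g)
    (hα0 : 0 ≤ α z) (hαδ : α z ≤ δ) (hpq : dist p q ≤ r) (hqz : dist q z ≤ r) (hr : 0 < r)
    (hrs : r < s) :
    ⨍ t in ball p s, |g t| ∂μ ≤ maxFun μ g q + 8 * K * holderSemi α g * r ^ α z := by
  set H := holderSemi α g
  set R := s + r with hRdef
  have hR : 0 < R := by linarith
  have hsub : ball p s ⊆ ball q R := ball_subset_ball' (by linarith)
  have hosc : ∀ t ∈ ball q R, |g z - g t| ≤ 2 * H * R ^ α z := fun t ht =>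
    hg.abs_sub_le_mul_rpow one_le_two hR.le hα0 (hαδ.trans hδ)
      (by linarith [dist_triangle z q t, mem_ball'.1 ht, dist_comm z q])
  have hupper : ∀ t ∈ ball q R, |g t| ≤ |g z| + 2 * H * R ^ α z := fun t ht => by
    linarith [hosc t ht, abs_sub_abs_le_abs_sub (g t) (g z), abs_sub_comm (g t) (g z)]
  have hlower : ∀ t ∈ ball q R, |g z| - 2 * H * R ^ α z ≤ |g t| := fun t ht => by
    linarith [hosc t ht, abs_sub_abs_le_abs_sub (g z) (g t)]
  have hrel : μ.real (ball q R \ ball p s) / μ.real (ball q R) ≤ K * (2 * r / R) ^ δ :=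
    div_le_of_le_mul₀ measureReal_nonneg (by positivity)
      (hann.measureReal_ball_sdiff_ball_le_s2 hK hball hpq hr hrs)
  have hHR : 0 ≤ 4 * H * R ^ α z :=
    mul_nonneg (mul_nonneg four_pos.le (holderSemi_nonneg α g)) (Real.rpow_nonneg hR.le _)
  calc ⨍ t in ball p s, |g t| ∂μ
      ≤ ⨍ t in ball q R, |g t| ∂μ + μ.real (ball q R \ ball p s) / μ.real (ball q R) *
          ((|g z| + 2 * H * R ^ α z) - (|g z| - 2 * H * R ^ α z)) :=
        setAverage_le_setAverage_add_of_subset hsub measurableSet_ball measurableSet_ball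
          (measure_ball_pos μ p (hr.trans hrs)).ne' (hball q R)
          (integrableOn_abs_of_bounded hg.1 hg.abs_le_iSup (hball q R))
          (fun t ht => hupper t (hsub ht)) (fun t ht => hlower t ht.1)
    _ = ⨍ t in ball q R, |g t| ∂μ + μ.real (ball q R \ ball p s) / μ.real (ball q R) *
          (4 * H * R ^ α z) := by ring
    _ ≤ maxFun μ g q + K * (2 * r / R) ^ δ * (4 * H * R ^ α z) :=
        add_le_add (setAverage_ball_le_maxFun_s2 hball hg.1 hg.abs_le_iSup q hR)
          (mul_le_mul_of_nonneg_right hrel hHR)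
    _ = maxFun μ g q + 4 * K * H * ((2 * r / R) ^ δ * R ^ α z) := by ring
    _ ≤ maxFun μ g q + 4 * K * H * (2 * r ^ α z) :=
        add_le_add le_rfl (mul_le_mul_of_nonneg_left
          (two_mul_div_rpow_mul_rpow_le hr.le hR (by linarith) hα0 hαδ hδ)
          (mul_nonneg (mul_nonneg four_pos.le hK) (holderSemi_nonneg α g)))
    _ = maxFun μ g q + 8 * K * H * r ^ α z := by ring

-- The exponent is read at a third point `z`, so that both inequalities between `Mg x` and
-- `Mg y` come with the exponent `α x`.
lemma maxFun_le_maxFun_add_mul_rpow (hball : ∀ x r, μ (ball x r) ≠ ∞)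
    (hann : HasAnnularDecay μ δ K) (hK : 0 ≤ K) (hδ : δ ≤ 1) (hg : MemVarHolder α g)
    (hα0 : 0 ≤ α z) (hαδ : α z ≤ δ) (hpq : dist p q ≤ r) (hqz : dist q z ≤ r) (hr : 0 < r) :
    maxFun μ g p ≤ maxFun μ g q + (4 + 8 * K) * holderSemi α g * r ^ α z := by
  have hHr := mul_nonneg (holderSemi_nonneg α g) (Real.rpow_nonneg hr.le (α z))
  have hKHr := mul_nonneg hK hHr
  refine maxFun_le_of_forall fun s hs => ?_
  rcases le_or_gt s r with hsr | hrs
  · have := setAverage_ball_le_maxFun_add_of_le hball hg hα0 (hαδ.trans hδ) hpq hqz hs hsr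
    linarith
  · have := setAverage_ball_le_maxFun_add_of_lt hball hann hK hδ hg hα0 hαδ hpq hqz hr hrs
    linarith

lemma abs_maxFun_sub_le_mul_dist_rpow (hball : ∀ x r, μ (ball x r) ≠ ∞)
    (hann : HasAnnularDecay μ δ K) (hK : 0 ≤ K) (hδ : δ ≤ 1) (hg : MemVarHolder α g) {x y : X}
    (hα0 : 0 ≤ α x) (hαδ : α x ≤ δ) (hxy : x ≠ y) :
    |maxFun μ g x - maxFun μ g y| ≤ (4 + 8 * K) * holderSemi α g * dist x y ^ α x := by
  have hd := dist_pos.2 hxy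
  rw [abs_sub_le_iff, sub_le_iff_le_add', sub_le_iff_le_add']
  exact ⟨maxFun_le_maxFun_add_mul_rpow hball hann hK hδ hg hα0 hαδ le_rfl
      (dist_comm y x).le hd,
    maxFun_le_maxFun_add_mul_rpow hball hann hK hδ hg hα0 hαδ (dist_comm y x).le
      (by simp [hd.le]) hd⟩

lemma abs_maxFun_sub_sub_le_mul_dist_rpow (hball : ∀ x r, μ (ball x r) ≠ ∞)
    (hann : HasAnnularDecay μ δ K) (hK : 0 ≤ K) (hδ : δ ≤ 1) (hg : MemVarHolder α g)
    (hf : MemVarHolder α f) {x y : X} (hα0 : 0 ≤ α x) (hαδ : α x ≤ δ) (hxy : x ≠ y) :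
    |(maxFun μ g x - maxFun μ f x) - (maxFun μ g y - maxFun μ f y)| ≤
      (4 + 8 * K) * (2 * holderSemi α f + holderSemi α (fun t => g t - f t)) *
        dist x y ^ α x := by
  have hgxy := abs_maxFun_sub_le_mul_dist_rpow hball hann hK hδ hg hα0 hαδ hxy
  have hfxy := abs_maxFun_sub_le_mul_dist_rpow hball hann hK hδ hf hα0 hαδ hxy
  have hsemi := mul_le_mul_of_nonneg_left (hg.holderSemi_le_add_holderSemi_sub hf)
    (by positivity : 0 ≤ (4 + 8 * K) * dist x y ^ α x)
  calc _ ≤ |maxFun μ g x - maxFun μ g y| + |maxFun μ f x - maxFun μ f y| := by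
        rw [sub_sub_sub_comm]; exact abs_sub _ _
    _ ≤ _ := by linarith

end HolderMaximal

/-- Continuity of the maximal operator from `C^{0,α(·)}(X)` to
`C^{0,β(·)}(X)` when `sup β/α < 1`. -/
theorem maximal_continuous_between_holder
    {X : Type*} [MetricSpace X] [MeasurableSpace X] [BorelSpace X] (μ : Measure X)
    (hopen : ∀ U : Set X, IsOpen U → U.Nonempty → 0 < μ U)
    (hbdd : ∀ s : Set X, Bornology.IsBounded s → μ s < ⊤)
    (δ : ℝ) (hδ : δ ∈ Set.Ioc (0 : ℝ) 1) (K : ℝ) (hK : 1 ≤ K)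
    (hann : ∀ (x : X) (r ε : ℝ), 0 < r → 0 < ε → ε < 1 →
      μ (ball x r \ ball x (r * (1 - ε))) ≤ ENNReal.ofReal (K * ε ^ δ) * μ (ball x r))
    (α β : X → ℝ) (hα : ∀ x, α x ∈ Set.Ioc (0 : ℝ) 1) (hβ : ∀ x, β x ∈ Set.Icc (0 : ℝ) 1)
    (hβα : ∀ x, β x ≤ α x) (hαδ : ∀ x, α x ≤ δ)
    (hθ : (⨆ x, β x / α x) < 1)
    (f : X → ℝ) (fn : ℕ → X → ℝ)
    (hf : MemVarHolder α f) (hfn : ∀ n, MemVarHolder α (fn n))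
    (hconv : Tendsto (fun n => holderNorm α (fun x => fn n x - f x)) atTop (nhds 0)) :
    Tendsto (fun n => holderNorm β (fun x => maxFun μ (fn n) x - maxFun μ f x))
      atTop (nhds 0) := by
  have : μ.IsOpenPosMeasure := ⟨fun U hU hne => (hopen U hU hne).ne'⟩
  have hball : ∀ x r, μ (ball x r) ≠ ∞ := fun x r => (hbdd _ isBounded_ball).ne
  have hK0 : 0 ≤ K := zero_le_one.trans hK
  set θ := ⨆ x, β x / α x
  have hθx : ∀ x, β x / α x ≤ θ := le_ciSup
    ⟨1, forall_mem_range.2 fun y => div_le_one_of_le₀ (hβα y) (hα y).1.le⟩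
  set ε := fun n => holderNorm α (fun x => fn n x - f x)
  set C := (4 + 8 * K) * (2 * holderSemi α f + 1)
  have hC : 1 ≤ C :=
    one_le_mul_of_one_le_of_one_le (by linarith) (by linarith [holderSemi_nonneg α f])
  have hbound : ∀ᶠ n in atTop, holderNorm β (fun x => maxFun μ (fn n) x - maxFun μ f x) ≤
      ε n + C * (2 * ε n) ^ (1 - θ) := by
    filter_upwards [hconv.eventually (ge_mem_nhds one_half_pos)] with n hn
    have hdiff := (hfn n).sub hf
    refine holderNorm_le_of_interpolation (holderNorm_nonneg _ _) (by linarith) hC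
      (fun x => (hα x).1) (fun x => (hβ x).1) hβα hθx hθ.le
      (abs_maxFun_sub_maxFun_le hball (hfn n).1 (hfn n).abs_le_iSup hf.1 hf.abs_le_iSup
        hdiff.abs_le_holderNorm) fun x y hxy => ?_
    refine (abs_maxFun_sub_sub_le_mul_dist_rpow hball hann hK0 hδ.2 (hfn n) hf (hα x).1.le
      (hαδ x) hxy).trans (mul_le_mul_of_nonneg_right ?_ (Real.rpow_nonneg dist_nonneg _))
    have := (holderSemi_le_holderNorm α _).trans hn
    exact mul_le_mul_of_nonneg_left (by linarith) (by linarith)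
  have hlim : Tendsto (fun n => ε n + C * (2 * ε n) ^ (1 - θ)) atTop (nhds 0) := by
    have h := (hconv.const_mul 2).rpow_const (Or.inr (sub_nonneg.2 hθ.le))
    simpa [Real.zero_rpow (sub_pos.2 hθ).ne'] using hconv.add (h.const_mul C)
  exact squeeze_zero' (Eventually.of_forall fun n => holderNorm_nonneg _ _) hbound hlim
end

section
/- Let $(X,d,\mu)$ be a metric measure space in which every nonempty open set has positive measure and every bounded set has finite measure, let $\alpha\colon X\to[0,1]$, and let $f\in C^{0,\alpha(\cdot)}(X)$ with $\sup_{u\neq v}\frac{|f(u)-f(v)|}{d(u,v)^{\alpha(u)}}\leq 1$. Let $x,y\in X$ be distinct with $a=d(x,y)\leq 1$ and let $0<r\leq a$. Then $\frac{1}{\mu(B(x,r))}\int_{B(x,r)}|f|\,d\mu-\frac{1}{\mu(B(y,r))}\int_{B(y,r)}|f|\,d\mu\leq 6\,a^{\alpha(y)}$. -/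
/-! By the first moment method, `⨍_{B(x,r)} |f| ≤ |f z|` and `|f w| ≤ ⨍_{B(y,r)} |f|` for some
`z ∈ B(x,r)` and `w ∈ B(y,r)`. With `a = d(x,y) ≥ r` both points are close to `y`
(`d(y,z) < 2a`, `d(y,w) < a`), so the Hölder bound based at `y` gives
`|f z| - |f w| ≤ (2a)^{α(y)} + a^{α(y)} ≤ 3 a^{α(y)}`. -/

open MeasureTheory Metric Set Filter

lemma setAverage_sub_setAverage_le {X : Type*} [MeasurableSpace X] {μ : Measure X}
    {s t : Set X} {g : X → ℝ} {C : ℝ} (hs₀ : μ s ≠ 0) (hs : μ s ≠ ⊤) (ht₀ : μ t ≠ 0)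
    (ht : μ t ≠ ⊤) (hgs : IntegrableOn g s μ) (hgt : IntegrableOn g t μ)
    (h : ∀ z ∈ s, ∀ w ∈ t, g z - g w ≤ C) :
    (⨍ z in s, g z ∂μ) - (⨍ w in t, g w ∂μ) ≤ C := by
  obtain ⟨z, hz, hfz⟩ := exists_setAverage_le hs₀ hs hgs
  obtain ⟨w, hw, hfw⟩ := exists_le_setAverage ht₀ ht hgt
  linarith [h z hz w hw]

lemma Continuous.integrableOn_of_bddAbove_abs {X : Type*} [TopologicalSpace X]
    [MeasurableSpace X] [OpensMeasurableSpace X] {μ : Measure X} {s : Set X} {f : X → ℝ}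
    (hf : Continuous f) (hbdd : BddAbove (range fun x => |f x|)) (hs : μ s ≠ ⊤) :
    IntegrableOn f s μ := by
  obtain ⟨M, hM⟩ := hbdd
  exact Measure.integrableOn_of_bounded hs hf.aestronglyMeasurable
    (ae_of_all _ fun x => hM (mem_range_self x))

lemma MemVarHolder.integrableOn_abs {X : Type*} [MetricSpace X] [MeasurableSpace X]
    [OpensMeasurableSpace X] {μ : Measure X} {α : X → ℝ} {f : X → ℝ} (hf : MemVarHolder α f)
    {s : Set X} (hs : μ s ≠ ⊤) : IntegrableOn (fun x => |f x|) s μ :=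
  hf.1.abs.integrableOn_of_bddAbove_abs (by simpa only [abs_abs] using hf.2.1) hs

lemma Real.rpow_le_mul_rpow_of_le_mul {s t c p : ℝ} (hs : 0 ≤ s) (ht : 0 ≤ t) (hc : 1 ≤ c)
    (hp₀ : 0 ≤ p) (hp₁ : p ≤ 1) (h : s ≤ c * t) : s ^ p ≤ c * t ^ p :=
  calc s ^ p ≤ (c * t) ^ p := Real.rpow_le_rpow hs h hp₀
    _ = c ^ p * t ^ p := Real.mul_rpow (by linarith) ht
    _ ≤ c * t ^ p := by
      gcongr
      simpa only [Real.rpow_one] using Real.rpow_le_rpow_of_exponent_le hc hp₁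

lemma abs_abs_sub_abs_le_dist_rpow {X : Type*} [MetricSpace X] {α f : X → ℝ}
    (hsemi : ∀ u v : X, u ≠ v → |f u - f v| ≤ dist u v ^ α u) (u v : X) :
    |(|f u| - |f v|)| ≤ dist u v ^ α u := by
  refine (abs_abs_sub_abs_le_abs_sub _ _).trans ?_
  rcases eq_or_ne u v with rfl | huv
  · simpa only [sub_self, abs_zero] using Real.rpow_nonneg dist_nonneg _
  · exact hsemi u v huv

theorem averages_diff_small_radius_y_general
    {X : Type*} [MetricSpace X] [MeasurableSpace X] [BorelSpace X] (μ : Measure X)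
    (hopen : ∀ U : Set X, IsOpen U → U.Nonempty → 0 < μ U)
    (hbdd : ∀ s : Set X, Bornology.IsBounded s → μ s < ⊤)
    (α : X → ℝ) (hα : ∀ x, α x ∈ Set.Icc (0 : ℝ) 1)
    (f : X → ℝ) (hf : MemVarHolder α f)
    (hsemi : ∀ u v : X, u ≠ v → |f u - f v| ≤ dist u v ^ α u)
    (x y : X)
    (r : ℝ) (hr0 : 0 < r) (hra : r ≤ dist x y) :
    (⨍ z in ball x r, |f z| ∂μ) - (⨍ z in ball y r, |f z| ∂μ) ≤ 6 * dist x y ^ α y := by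
  set a := dist x y
  have hA : 0 ≤ a ^ α y := Real.rpow_nonneg dist_nonneg _
  have hpos : ∀ c, μ (ball c r) ≠ 0 := fun c => (hopen _ isOpen_ball (nonempty_ball.2 hr0)).ne'
  have hfin : ∀ c, μ (ball c r) ≠ ⊤ := fun c => (hbdd _ isBounded_ball).ne
  refine setAverage_sub_setAverage_le (hpos x) (hfin x) (hpos y) (hfin y)
    (hf.integrableOn_abs (hfin x)) (hf.integrableOn_abs (hfin y)) fun z hz w hw => ?_
  have hyz : dist y z ≤ 2 * a := by
    linarith [dist_triangle y x z, dist_comm y x, (mem_ball'.1 hz).le]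
  have hyw : dist y w ≤ a := by linarith [(mem_ball'.1 hw).le]
  have hfz := (abs_le.1 (abs_abs_sub_abs_le_dist_rpow hsemi y z)).1
  have hfw := (abs_le.1 (abs_abs_sub_abs_le_dist_rpow hsemi y w)).2
  have hyz_rpow := Real.rpow_le_mul_rpow_of_le_mul dist_nonneg dist_nonneg one_le_two
    (hα y).1 (hα y).2 hyz
  have hyw_rpow := Real.rpow_le_rpow dist_nonneg hyw (hα y).1
  linarith

/-- Subcase 2.1. Difference of ball averages for a small radius `r ≤ a`,
estimated by `6 a^{α(y)}`. -/
theorem averages_diff_small_radius_y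
    {X : Type*} [MetricSpace X] [MeasurableSpace X] [BorelSpace X] (μ : Measure X)
    (hopen : ∀ U : Set X, IsOpen U → U.Nonempty → 0 < μ U)
    (hbdd : ∀ s : Set X, Bornology.IsBounded s → μ s < ⊤)
    (α : X → ℝ) (hα : ∀ x, α x ∈ Set.Icc (0 : ℝ) 1)
    (f : X → ℝ) (hf : MemVarHolder α f)
    (hsemi : ∀ u v : X, u ≠ v → |f u - f v| ≤ dist u v ^ α u)
    (x y : X) (hxy : x ≠ y) (hd : dist x y ≤ 1)
    (r : ℝ) (hr0 : 0 < r) (hra : r ≤ dist x y) :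
    (⨍ z in ball x r, |f z| ∂μ) - (⨍ z in ball y r, |f z| ∂μ) ≤ 6 * dist x y ^ α y :=
  averages_diff_small_radius_y_general μ hopen hbdd α hα f hf hsemi x y r hr0 hra
end

section
/- Let $f\colon\mathbb{R}\to\mathbb{R}$ be the continuous $2$-periodic function with $f(x)=|x|$ for $x\in[-1,1]$. Then for $x\in[0,1]$, the Hardy–Littlewood maximal function of $f$ is given by $Mf(x)=2-\sqrt{x^{2}+2}$ if $0\leq x\leq \tfrac12$ and $Mf(x)=x$ if $\tfrac12<x\leq 1$. -/
open MeasureTheory Metric Set Filter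

noncomputable def maxFunR (f : ℝ → ℝ) (x : ℝ) : ℝ :=
  ⨆ r : {r : ℝ // 0 < r}, (1 / (2 * r.1)) * ∫ t in x - r.1..x + r.1, |f t|

/-! Only `|f|` enters `M f`, and `|f|` is again the `2`-periodic extension of `|x|`. Its
primitive `F y = ∫₀^y f` satisfies `F (y + 2) = F y + 1` and `F y = y |y| / 2` on `[-1, 1]`, so
for `r ≤ 2` the integral over `[x - r, x + r]` is an explicit piecewise quadratic in `r`.
Stripping whole periods from both ends of the interval moves an average towards the mean `1 / 2`,
so for a bound `c ≥ 1 / 2` on the averages the radii `r ≤ 2` suffice. For `x ≤ 1 / 2` the best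
radius is `r = √(x ^ 2 + 2)`; for `x > 1 / 2` every average is at most `x = f x`, which is the
limit of the averages as `r → 0`. -/

section MaxFunR

variable {f : ℝ → ℝ} {x c : ℝ}

lemma maxFunR_le (h : ∀ r > 0, ∫ t in x - r..x + r, |f t| ≤ 2 * r * c) :
    maxFunR f x ≤ c := by
  have : Nonempty {r : ℝ // 0 < r} := ⟨⟨1, one_pos⟩⟩
  refine ciSup_le fun r => ?_
  rw [one_div, inv_mul_le_iff₀ (mul_pos two_pos r.2)]
  exact h r.1 r.2

lemma le_maxFunR {d r : ℝ} (h : ∀ r > 0, ∫ t in x - r..x + r, |f t| ≤ 2 * r * c)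
    (hr : 0 < r) (hd : 2 * r * d ≤ ∫ t in x - r..x + r, |f t|) : d ≤ maxFunR f x := by
  have hbdd : BddAbove (range fun r : {r : ℝ // 0 < r} =>
      (1 / (2 * r.1)) * ∫ t in x - r.1..x + r.1, |f t|) := by
    refine ⟨c, forall_mem_range.2 fun r => ?_⟩
    rw [one_div, inv_mul_le_iff₀ (mul_pos two_pos r.2)]
    exact h r.1 r.2
  calc d ≤ (1 / (2 * r)) * ∫ t in x - r..x + r, |f t| := by
        rwa [one_div, le_inv_mul_iff₀ (mul_pos two_pos hr)]
    _ ≤ maxFunR f x := le_ciSup hbdd ⟨r, hr⟩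

lemma abs_le_maxFunR (hf : Continuous f)
    (h : ∀ r > 0, ∫ t in x - r..x + r, |f t| ≤ 2 * r * c) : |f x| ≤ maxFunR f x := by
  refine le_of_forall_pos_le_add fun ε hε => ?_
  obtain ⟨δ, hδ, hclose⟩ := Metric.continuous_iff.1 hf.abs x ε hε
  have hmono : ∫ _ in x - δ / 2..x + δ / 2, (|f x| - ε) ≤
      ∫ t in x - δ / 2..x + δ / 2, |f t| := by
    refine intervalIntegral.integral_mono_on (by linarith) intervalIntegrable_const
      (hf.abs.intervalIntegrable _ _) fun t ht => ?_
    have ht' : dist t x < δ := by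
      rw [Real.dist_eq, abs_lt]
      constructor <;> linarith [ht.1, ht.2]
    linarith [abs_lt.1 (hclose t ht')]
  rw [intervalIntegral.integral_const, smul_eq_mul] at hmono
  have := le_maxFunR (d := |f x| - ε) h (half_pos hδ) (by linarith)
  linarith

end MaxFunR

lemma Function.Periodic.integral_sub_add_le {f : ℝ → ℝ} {T x c : ℝ}
    (hper : Function.Periodic f T) (hT : 0 < T) (hint : ∀ a b, IntervalIntegrable f volume a b)
    (hc : ∫ t in 0..T, f t ≤ T * c)
    (h : ∀ r ∈ Ioc 0 T, ∫ t in x - r..x + r, f t ≤ 2 * r * c) {r : ℝ} (hr : 0 < r) :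
    ∫ t in x - r..x + r, f t ≤ 2 * r * c := by
  -- `r = r' + n T`, `r' ∈ (0, T]`: each end piece of length `n T` integrates to `n ∫₀ᵀ f`
  set n := toIocDiv hT 0 r
  set r' := toIocMod hT 0 r
  have hr' : r' ∈ Ioc 0 T := by simpa using toIocMod_mem_Ioc hT 0 r
  have hsplit : r = r' + n * T := by
    rw [← zsmul_eq_mul, toIocMod_add_toIocDiv_zsmul]
  have hn : (0 : ℝ) ≤ n := by
    suffices -1 < n by exact_mod_cast (by omega : 0 ≤ n)
    suffices (-1 : ℝ) < n by exact_mod_cast this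
    by_contra! hn
    nlinarith [hr'.2]
  have hperiods (a : ℝ) : ∫ t in a..a + n * T, f t = n * ∫ t in 0..T, f t := by
    rw [← zsmul_eq_mul, hper.intervalIntegral_add_zsmul_eq n a hint,
      hper.intervalIntegral_add_eq a 0, zero_add, zsmul_eq_mul]
  have hleft := hperiods (x - r)
  have hright := hperiods (x + r')
  rw [show x - r + n * T = x - r' by rw [hsplit]; ring] at hleft
  rw [show x + r' + n * T = x + r by rw [hsplit]; ring] at hright
  rw [← intervalIntegral.integral_add_adjacent_intervals (hint _ (x - r')) (hint _ (x + r)),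
    ← intervalIntegral.integral_add_adjacent_intervals (hint _ (x + r')) (hint _ (x + r)),
    hleft, hright, hsplit]
  nlinarith [h r' hr', mul_le_mul_of_nonneg_left hc hn]

lemma sqrt_sq_add_two_mem_Icc {x : ℝ} (hx : x ∈ Icc (0 : ℝ) (1 / 2)) :
    √(x ^ 2 + 2) ∈ Icc (1 + x) (2 - x) :=
  ⟨(Real.le_sqrt (by linarith [hx.1]) (by positivity)).2 (by nlinarith [hx.1, hx.2]),
    Real.sqrt_le_iff.2 ⟨by linarith [hx.2], by nlinarith [hx.1, hx.2]⟩⟩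

structure IsPeriodicAbs (f : ℝ → ℝ) : Prop where
  periodic : Function.Periodic f 2
  eq_abs : ∀ x ∈ Icc (-1 : ℝ) 1, f x = |x|

namespace IsPeriodicAbs

variable {f : ℝ → ℝ}

lemma abs (hf : IsPeriodicAbs f) : IsPeriodicAbs fun t => |f t| where
  periodic t := by simp only [hf.periodic t]
  eq_abs x hx := by rw [hf.eq_abs x hx, abs_abs]

lemma intervalIntegrable (hf : IsPeriodicAbs f) (a b : ℝ) : IntervalIntegrable f volume a b := by
  refine hf.periodic.intervalIntegrable two_ne_zero (t := -1) ?_ a b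
  refine (continuous_abs.intervalIntegrable (-1) (-1 + 2)).congr fun t ht => (hf.eq_abs t ?_).symm
  rw [uIoc_of_le (by norm_num)] at ht
  exact ⟨ht.1.le, by linarith [ht.2]⟩

lemma integral_from_zero_of_mem_Icc_zero_one (hf : IsPeriodicAbs f) {y : ℝ}
    (hy : y ∈ Icc (0 : ℝ) 1) : ∫ t in 0..y, f t = y ^ 2 / 2 := by
  rw [intervalIntegral.integral_congr (g := fun t => t) fun t ht => ?_, integral_id]
  · ring
  rw [uIcc_of_le hy.1] at ht
  rw [hf.eq_abs t ⟨by linarith [ht.1], ht.2.trans hy.2⟩, abs_of_nonneg ht.1]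

lemma integral_from_zero_of_mem_Icc_neg_one_zero (hf : IsPeriodicAbs f) {y : ℝ}
    (hy : y ∈ Icc (-1 : ℝ) 0) : ∫ t in 0..y, f t = -(y ^ 2 / 2) := by
  rw [intervalIntegral.integral_congr (g := fun t => -t) fun t ht => ?_,
    intervalIntegral.integral_neg, integral_id]
  · ring
  rw [uIcc_of_ge hy.2] at ht
  rw [hf.eq_abs t ⟨hy.1.trans ht.1, by linarith [ht.2]⟩, abs_of_nonpos ht.2]

lemma integral_period (hf : IsPeriodicAbs f) : ∫ t in 0..2, f t = 1 := by
  have hshift := hf.periodic.intervalIntegral_add_eq 0 (-1)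
  rw [zero_add, show (-1 : ℝ) + 2 = 1 by norm_num] at hshift
  rw [hshift, ← intervalIntegral.integral_interval_sub_left (hf.intervalIntegrable 0 1)
      (hf.intervalIntegrable 0 (-1)),
    hf.integral_from_zero_of_mem_Icc_zero_one (by norm_num),
    hf.integral_from_zero_of_mem_Icc_neg_one_zero (by norm_num)]
  norm_num

lemma integral_from_zero_add_two (hf : IsPeriodicAbs f) (y : ℝ) :
    ∫ t in 0..y + 2, f t = (∫ t in 0..y, f t) + 1 := by
  rw [hf.periodic.intervalIntegral_add_eq_add 0 y hf.intervalIntegrable, zero_add,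
    hf.integral_period]

lemma integral_from_zero_of_mem_Icc_neg_two_neg_one (hf : IsPeriodicAbs f) {y : ℝ}
    (hy : y ∈ Icc (-2 : ℝ) (-1)) : ∫ t in 0..y, f t = (y + 2) ^ 2 / 2 - 1 := by
  have := hf.integral_from_zero_add_two y
  rw [hf.integral_from_zero_of_mem_Icc_zero_one (y := y + 2)
    ⟨by linarith [hy.1], by linarith [hy.2]⟩] at this
  linarith

lemma integral_from_zero_of_mem_Icc_one_two (hf : IsPeriodicAbs f) {y : ℝ}
    (hy : y ∈ Icc (1 : ℝ) 2) : ∫ t in 0..y, f t = 1 - (y - 2) ^ 2 / 2 := by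
  have := hf.integral_from_zero_add_two (y - 2)
  rw [sub_add_cancel, hf.integral_from_zero_of_mem_Icc_neg_one_zero (y := y - 2)
    ⟨by linarith [hy.1], by linarith [hy.2]⟩] at this
  linarith

lemma integral_from_zero_of_mem_Icc_two_three (hf : IsPeriodicAbs f) {y : ℝ}
    (hy : y ∈ Icc (2 : ℝ) 3) : ∫ t in 0..y, f t = 1 + (y - 2) ^ 2 / 2 := by
  have := hf.integral_from_zero_add_two (y - 2)
  rw [sub_add_cancel, hf.integral_from_zero_of_mem_Icc_zero_one (y := y - 2)
    ⟨by linarith [hy.1], by linarith [hy.2]⟩] at this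
  linarith

lemma integral_sub_add_le (hf : IsPeriodicAbs f) {x c : ℝ} (hc : 1 ≤ 2 * c)
    (h : ∀ r ∈ Ioc (0 : ℝ) 2, ∫ t in x - r..x + r, f t ≤ 2 * r * c) :
    ∀ r > 0, ∫ t in x - r..x + r, f t ≤ 2 * r * c := fun _ hr =>
  hf.periodic.integral_sub_add_le two_pos hf.intervalIntegrable
    (hf.integral_period.trans_le hc) h hr

lemma integral_sub_add_le_two_sub_sqrt (hf : IsPeriodicAbs f) {x r : ℝ}
    (hx : x ∈ Icc (0 : ℝ) (1 / 2)) (hr : r ∈ Ioc (0 : ℝ) 2) :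
    ∫ t in x - r..x + r, f t ≤ 2 * r * (2 - √(x ^ 2 + 2)) := by
  obtain ⟨hs1, hs2⟩ := sqrt_sq_add_two_mem_Icc hx
  obtain ⟨hx0, hx⟩ := hx
  obtain ⟨hr0, hr2⟩ := hr
  set s := √(x ^ 2 + 2)
  have hs : s ^ 2 = x ^ 2 + 2 := Real.sq_sqrt (by positivity)
  rw [← intervalIntegral.integral_interval_sub_left (hf.intervalIntegrable 0 _)
    (hf.intervalIntegrable 0 _)]
  rcases lt_or_ge (x - r) (-1) with ha | ha
  · rw [hf.integral_from_zero_of_mem_Icc_neg_two_neg_one ⟨by linarith, ha.le⟩]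
    rcases le_or_gt (x + r) 2 with hb | hb
    · rw [hf.integral_from_zero_of_mem_Icc_one_two ⟨by linarith, hb⟩]
      -- here the integral is `2 r (2 - s) - (r - s) ^ 2`: the optimal radius is `r = s`
      nlinarith [sq_nonneg (r - s)]
    · rw [hf.integral_from_zero_of_mem_Icc_two_three ⟨hb.le, by linarith⟩]
      nlinarith [mul_nonneg (by linarith : (0 : ℝ) ≤ r - (2 - x))
        (by linarith : 0 ≤ 2 - x - s)]
  · rcases le_or_gt (x - r) 0 with ha0 | ha0
    · rw [hf.integral_from_zero_of_mem_Icc_neg_one_zero ⟨ha, ha0⟩]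
      rcases le_or_gt (x + r) 1 with hb | hb
      · rw [hf.integral_from_zero_of_mem_Icc_zero_one ⟨by linarith, hb⟩]
        nlinarith
      · rw [hf.integral_from_zero_of_mem_Icc_one_two ⟨hb.le, by linarith⟩]
        nlinarith
    · rw [hf.integral_from_zero_of_mem_Icc_zero_one ⟨ha0.le, by linarith⟩,
        hf.integral_from_zero_of_mem_Icc_zero_one ⟨by linarith, by linarith⟩]
      nlinarith

lemma integral_sub_sqrt_add_sqrt (hf : IsPeriodicAbs f) {x : ℝ}
    (hx : x ∈ Icc (0 : ℝ) (1 / 2)) :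
    ∫ t in x - √(x ^ 2 + 2)..x + √(x ^ 2 + 2), f t =
      2 * √(x ^ 2 + 2) * (2 - √(x ^ 2 + 2)) := by
  obtain ⟨hs1, hs2⟩ := sqrt_sq_add_two_mem_Icc hx
  obtain ⟨hx0, hx⟩ := hx
  have hs : √(x ^ 2 + 2) ^ 2 = x ^ 2 + 2 := Real.sq_sqrt (by positivity)
  rw [← intervalIntegral.integral_interval_sub_left (hf.intervalIntegrable 0 _)
      (hf.intervalIntegrable 0 _),
    hf.integral_from_zero_of_mem_Icc_one_two ⟨by linarith, by linarith⟩,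
    hf.integral_from_zero_of_mem_Icc_neg_two_neg_one ⟨by linarith, by linarith⟩]
  linear_combination hs

lemma integral_sub_add_le_self (hf : IsPeriodicAbs f) {x r : ℝ} (hx : x ∈ Ioc (1 / 2 : ℝ) 1)
    (hr : r ∈ Ioc (0 : ℝ) 2) : ∫ t in x - r..x + r, f t ≤ 2 * r * x := by
  obtain ⟨hx0, hx⟩ := hx
  obtain ⟨hr0, hr2⟩ := hr
  rw [← intervalIntegral.integral_interval_sub_left (hf.intervalIntegrable 0 _)
    (hf.intervalIntegrable 0 _)]
  rcases lt_or_ge (x - r) (-1) with ha | ha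
  · rw [hf.integral_from_zero_of_mem_Icc_neg_two_neg_one ⟨by linarith, ha.le⟩,
      hf.integral_from_zero_of_mem_Icc_two_three ⟨by linarith, by linarith⟩]
    nlinarith
  · rcases le_or_gt (x - r) 0 with ha0 | ha0
    · rw [hf.integral_from_zero_of_mem_Icc_neg_one_zero ⟨ha, ha0⟩]
      rcases le_or_gt (x + r) 2 with hb | hb
      · rw [hf.integral_from_zero_of_mem_Icc_one_two ⟨by linarith, hb⟩]
        nlinarith
      · rw [hf.integral_from_zero_of_mem_Icc_two_three ⟨hb.le, by linarith⟩]
        nlinarith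
    · rw [hf.integral_from_zero_of_mem_Icc_zero_one ⟨ha0.le, by linarith⟩]
      rcases le_or_gt (x + r) 1 with hb | hb
      · rw [hf.integral_from_zero_of_mem_Icc_zero_one ⟨by linarith, hb⟩]
        nlinarith
      · rw [hf.integral_from_zero_of_mem_Icc_one_two ⟨hb.le, by linarith⟩]
        nlinarith

end IsPeriodicAbs

/-- Explicit formula for the maximal function of the `2`-periodic
extension of `|x|`. -/
theorem maximal_function_of_periodic_abs
    (f : ℝ → ℝ) (hf : Continuous f) (hper : ∀ t, f (t + 2) = f t)
    (hval : ∀ x ∈ Set.Icc (-1 : ℝ) 1, f x = |x|) :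
    ∀ x ∈ Set.Icc (0 : ℝ) 1,
      (x ≤ 1 / 2 → maxFunR f x = 2 - Real.sqrt (x ^ 2 + 2)) ∧
      (1 / 2 < x → maxFunR f x = x) := by
  intro x ⟨hx0, hx1⟩
  have habs : IsPeriodicAbs fun t => |f t| := (IsPeriodicAbs.mk hper hval).abs
  constructor
  · intro hx
    have hs1 : 1 ≤ √(x ^ 2 + 2) := by linarith [(sqrt_sq_add_two_mem_Icc ⟨hx0, hx⟩).1]
    have hs32 : √(x ^ 2 + 2) ≤ 3 / 2 := Real.sqrt_le_iff.2 ⟨by norm_num, by nlinarith⟩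
    have hbound := habs.integral_sub_add_le (by linarith)
      fun r hr => habs.integral_sub_add_le_two_sub_sqrt ⟨hx0, hx⟩ hr
    exact le_antisymm (maxFunR_le hbound)
      (le_maxFunR hbound (by linarith) (habs.integral_sub_sqrt_add_sqrt ⟨hx0, hx⟩).ge)
  · intro hx
    have hbound := habs.integral_sub_add_le (by linarith)
      fun r hr => habs.integral_sub_add_le_self ⟨hx, hx1⟩ hr
    refine le_antisymm (maxFunR_le hbound) ?_
    simpa [hval x ⟨by linarith, hx1⟩, abs_of_nonneg hx0] using abs_le_maxFunR hf hbound
end
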